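/- arXiv:2601.10470 — 2 statements merged into one kernel-verified Lean document; each statement's English description precedes it below -/
import Mathlib

section
/- For discrete random variables W, X^n, S^n, Y^n on a finite probability space satisfying: (i) S^n = (S_1,…,S_n) are i.i.d. and independent of W; (ii) X_i is a function of (W, S^{i-1}) (no feedback through Y); (iii) Y_i depends only on (X_i, S_i), i.e., Y_i is conditionally independent of (W, X^{i-1}, Y^{i-1}, S^{i-1}, S_{i+1}^n) given (X_i, S_i); then I(W; Y^n | S^n) ≤ Σ_{i=1}^n I(X_i; Y_i | S_i). -/
set_option linter.unusedSectionVars false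
set_option linter.unusedVariables false


/-- Conditional mutual information `I(A; B | C)` (in bits) of a joint pmf on `A × B × C`. -/
noncomputable def cmi {A B C : Type*} [Fintype A] [Fintype B] [Fintype C]
    (μ : A → B → C → ℝ) : ℝ :=
  ∑ a, ∑ b, ∑ c, μ a b c *
    Real.logb 2 ((μ a b c * (∑ a', ∑ b', μ a' b' c)) /
      ((∑ b', μ a b' c) * (∑ a', μ a' b c)))

open Finset

section Helpers
lemma sum_pi_prod {ι β : Type*} [Fintype ι] [DecidableEq ι] [Fintype β]
    (f : ι → β → ℝ) :
    ∑ y : ι → β, ∏ j, f j (y j) = ∏ j, ∑ b, f j b := by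
  rw [Finset.prod_univ_sum, Fintype.piFinset_univ]

lemma sum_pi_ite {ι β : Type*} [Fintype ι] [DecidableEq ι] [Fintype β] [DecidableEq β]
    (i : ι) (b : β) (f : ι → β → ℝ) (hf : ∀ j, ∑ t, f j t = 1) :
    ∑ y : ι → β, (if y i = b then ∏ j, f j (y j) else 0) = f i b := by
  have h1 : ∀ y : ι → β, (if y i = b then ∏ j, f j (y j) else 0)
      = ∏ j, (if j = i then (if y j = b then f j (y j) else 0) else f j (y j)) := by
    intro y
    by_cases h : y i = b
    · rw [if_pos h]
      refine Finset.prod_congr rfl fun j _ => ?_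
      by_cases hj : j = i
      · subst hj; rw [if_pos rfl, if_pos h]
      · rw [if_neg hj]
    · rw [if_neg h]
      symm
      apply Finset.prod_eq_zero (Finset.mem_univ i)
      rw [if_pos rfl, if_neg h]
  simp_rw [h1]
  rw [sum_pi_prod (f := fun j t => if j = i then (if t = b then f j t else 0) else f j t)]
  have h2 : ∀ j, (∑ t, if j = i then (if t = b then f j t else 0) else f j t)
      = if j = i then f j b else 1 := by
    intro j
    by_cases hj : j = i
    · simp [hj, Finset.sum_ite_eq' Finset.univ b (f j)]
    · simp [hj, hf j]
  simp_rw [h2]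
  simp
end Helpers

section Defs
variable {W 𝓧 𝓢 𝓨 : Type*} [Fintype W] [Fintype 𝓧] [Fintype 𝓢] [Fintype 𝓨]
    [DecidableEq 𝓧] [DecidableEq 𝓢] [DecidableEq 𝓨]
    (n : ℕ) (PW : W → ℝ) (PS : 𝓢 → ℝ) (K : 𝓧 → 𝓢 → 𝓨 → ℝ)
    (enc : W → (Fin n → 𝓢) → Fin n → 𝓧)

noncomputable def Fj (w : W) (y : Fin n → 𝓨) (s : Fin n → 𝓢) : ℝ :=
  PW w * (∏ j, PS (s j)) * ∏ j, K (enc w s j) (s j) (y j)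

noncomputable def nu (i : Fin n) (a : 𝓧) (b : 𝓨) (c : 𝓢) : ℝ :=
  ∑ w, ∑ s : Fin n → 𝓢, ∑ y : Fin n → 𝓨,
    if enc w s i = a ∧ y i = b ∧ s i = c then Fj n PW PS K enc w y s else 0

noncomputable def alphaM (i : Fin n) (a : 𝓧) (c : 𝓢) : ℝ :=
  ∑ w, ∑ s : Fin n → 𝓢,
    if enc w s i = a ∧ s i = c then PW w * ∏ j, PS (s j) else 0

noncomputable def betaM (i : Fin n) (b : 𝓨) (c : 𝓢) : ℝ :=
  ∑ a, nu n PW PS K enc i a b c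
end Defs

section Facts
variable {W 𝓧 𝓢 𝓨 : Type*} [Fintype W] [Fintype 𝓧] [Fintype 𝓢] [Fintype 𝓨]
    [DecidableEq 𝓧] [DecidableEq 𝓢] [DecidableEq 𝓨]
    {n : ℕ} {PW : W → ℝ} {PS : 𝓢 → ℝ} {K : 𝓧 → 𝓢 → 𝓨 → ℝ}
    {enc : W → (Fin n → 𝓢) → Fin n → 𝓧}

lemma Fj_nonneg (hPW0 : ∀ w, 0 ≤ PW w) (hPS0 : ∀ s, 0 ≤ PS s)
    (hK0 : ∀ x s y, 0 ≤ K x s y) (w : W) (y : Fin n → 𝓨) (s : Fin n → 𝓢) :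
    0 ≤ Fj n PW PS K enc w y s := by
  unfold Fj
  apply mul_nonneg (mul_nonneg (hPW0 w) (Finset.prod_nonneg fun j _ => hPS0 _))
  exact Finset.prod_nonneg fun j _ => hK0 _ _ _

lemma nu_nonneg (hPW0 : ∀ w, 0 ≤ PW w) (hPS0 : ∀ s, 0 ≤ PS s)
    (hK0 : ∀ x s y, 0 ≤ K x s y) (i : Fin n) (a : 𝓧) (b : 𝓨) (c : 𝓢) :
    0 ≤ nu n PW PS K enc i a b c := by
  unfold nu
  refine Finset.sum_nonneg fun w _ => Finset.sum_nonneg fun s _ => Finset.sum_nonneg fun y _ => ?_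
  split
  · exact Fj_nonneg hPW0 hPS0 hK0 w y s
  · exact le_refl 0

lemma sum_prodK (hK1 : ∀ x s, ∑ y, K x s y = 1) (w : W) (s : Fin n → 𝓢) :
    ∑ y : Fin n → 𝓨, ∏ j, K (enc w s j) (s j) (y j) = 1 := by
  rw [sum_pi_prod (f := fun j t => K (enc w s j) (s j) t)]
  simp [hK1]

lemma sum_prodPS (hPS1 : ∑ s, PS s = 1) :
    ∑ s : Fin n → 𝓢, ∏ j, PS (s j) = 1 := by
  rw [sum_pi_prod (f := fun (j : Fin n) t => PS t)]
  simp [hPS1]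

lemma sumY_Fj (hK1 : ∀ x s, ∑ y, K x s y = 1) (w : W) (s : Fin n → 𝓢) :
    ∑ y : Fin n → 𝓨, Fj n PW PS K enc w y s = PW w * ∏ j, PS (s j) := by
  unfold Fj
  rw [← Finset.mul_sum, sum_prodK hK1, mul_one]

lemma sumWY_Fj (hPW1 : ∑ w, PW w = 1) (hK1 : ∀ x s, ∑ y, K x s y = 1) (s : Fin n → 𝓢) :
    ∑ w, ∑ y : Fin n → 𝓨, Fj n PW PS K enc w y s = ∏ j, PS (s j) := by
  simp_rw [sumY_Fj hK1]
  rw [← Finset.sum_mul, hPW1, one_mul]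

lemma nu_eq (hK1 : ∀ x s, ∑ y, K x s y = 1) (i : Fin n) (a : 𝓧) (b : 𝓨) (c : 𝓢) :
    nu n PW PS K enc i a b c = K a c b * alphaM n PW PS enc i a c := by
  unfold nu alphaM
  rw [Finset.mul_sum]
  refine Finset.sum_congr rfl fun w _ => ?_
  rw [Finset.mul_sum]
  refine Finset.sum_congr rfl fun s _ => ?_
  by_cases h : enc w s i = a ∧ s i = c
  · have hy : ∀ y : Fin n → 𝓨,
        (if enc w s i = a ∧ y i = b ∧ s i = c then Fj n PW PS K enc w y s else 0)
        = (PW w * ∏ j, PS (s j)) * (if y i = b then ∏ j, K (enc w s j) (s j) (y j) else 0) := by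
      intro y
      by_cases hy : y i = b
      · rw [if_pos ⟨h.1, hy, h.2⟩, if_pos hy]; rfl
      · rw [if_neg (by tauto), if_neg hy, mul_zero]
    simp_rw [hy]
    rw [← Finset.mul_sum,
      sum_pi_ite (i := i) (b := b) (f := fun j t => K (enc w s j) (s j) t)
        (fun j => hK1 _ _)]
    rw [if_pos h, ← h.1, ← h.2]
    ring
  · rw [if_neg h, mul_zero]
    refine Finset.sum_eq_zero fun y _ => ?_
    rw [if_neg (by tauto)]

lemma sum_alphaM (hPW1 : ∑ w, PW w = 1) (hPS1 : ∑ s, PS s = 1) (i : Fin n) (c : 𝓢) :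
    ∑ a, alphaM n PW PS enc i a c = PS c := by
  unfold alphaM
  rw [Finset.sum_comm]
  have hw : ∀ w, ∑ a, ∑ s : Fin n → 𝓢,
      (if enc w s i = a ∧ s i = c then PW w * ∏ j, PS (s j) else 0)
      = PW w * PS c := by
    intro w
    rw [Finset.sum_comm]
    have hs : ∀ s : Fin n → 𝓢, (∑ a, if enc w s i = a ∧ s i = c then PW w * ∏ j, PS (s j) else 0)
        = PW w * (if s i = c then ∏ j, PS (s j) else 0) := by
      intro s
      by_cases h : s i = c
      · simp only [h, and_true, if_pos]
        rw [Finset.sum_ite_eq Finset.univ (enc w s i) (fun _ => PW w * ∏ j, PS (s j))]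
        simp
      · simp [h]
    simp_rw [hs]
    rw [← Finset.mul_sum,
      sum_pi_ite (i := i) (b := c) (f := fun (j : Fin n) t => PS t) (fun j => hPS1)]
  simp_rw [hw]
  rw [← Finset.sum_mul, hPW1, one_mul]

lemma sumB_nu (hK1 : ∀ x s, ∑ y, K x s y = 1) (i : Fin n) (a : 𝓧) (c : 𝓢) :
    ∑ b, nu n PW PS K enc i a b c = alphaM n PW PS enc i a c := by
  simp_rw [nu_eq hK1]
  rw [← Finset.sum_mul, hK1, one_mul]

lemma sum_betaM (hPW1 : ∑ w, PW w = 1) (hPS1 : ∑ s, PS s = 1)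
    (hK1 : ∀ x s, ∑ y, K x s y = 1) (i : Fin n) (c : 𝓢) :
    ∑ b, betaM n PW PS K enc i b c = PS c := by
  unfold betaM
  rw [Finset.sum_comm]
  simp_rw [sumB_nu hK1]
  exact sum_alphaM hPW1 hPS1 i c

lemma Fj_le_nu (hPW0 : ∀ w, 0 ≤ PW w) (hPS0 : ∀ s, 0 ≤ PS s)
    (hK0 : ∀ x s y, 0 ≤ K x s y) (i : Fin n)
    (w : W) (y : Fin n → 𝓨) (s : Fin n → 𝓢) :
    Fj n PW PS K enc w y s ≤ nu n PW PS K enc i (enc w s i) (y i) (s i) := by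
  have hF0 := Fj_nonneg (enc := enc) hPW0 hPS0 hK0
  have step1 : Fj n PW PS K enc w y s
      ≤ ∑ y' : Fin n → 𝓨, (if enc w s i = enc w s i ∧ y' i = y i ∧ s i = s i
          then Fj n PW PS K enc w y' s else 0) := by
    have := Finset.single_le_sum (f := fun y' : Fin n → 𝓨 =>
      if enc w s i = enc w s i ∧ y' i = y i ∧ s i = s i then Fj n PW PS K enc w y' s else 0)
      (fun y' _ => by
        by_cases h : y' i = y i
        · simpa [if_pos h] using hF0 w y' s
        · simp [if_neg h]) (Finset.mem_univ y)
    simpa using this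
  have step2 : ∀ w' s', (0:ℝ) ≤ ∑ y' : Fin n → 𝓨,
      (if enc w' s' i = enc w s i ∧ y' i = y i ∧ s' i = s i
        then Fj n PW PS K enc w' y' s' else 0) := by
    intro w' s'
    refine Finset.sum_nonneg fun y' _ => ?_
    split
    · exact hF0 _ _ _
    · exact le_refl 0
  have step3 : (∑ y' : Fin n → 𝓨, (if enc w s i = enc w s i ∧ y' i = y i ∧ s i = s i
          then Fj n PW PS K enc w y' s else 0))
      ≤ ∑ s' : Fin n → 𝓢, ∑ y' : Fin n → 𝓨,
          (if enc w s' i = enc w s i ∧ y' i = y i ∧ s' i = s i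
            then Fj n PW PS K enc w y' s' else 0) :=
    Finset.single_le_sum (fun s' _ => step2 w s') (Finset.mem_univ s)
  have step4 : (∑ s' : Fin n → 𝓢, ∑ y' : Fin n → 𝓨,
          (if enc w s' i = enc w s i ∧ y' i = y i ∧ s' i = s i
            then Fj n PW PS K enc w y' s' else 0))
      ≤ nu n PW PS K enc i (enc w s i) (y i) (s i) := by
    unfold nu
    exact Finset.single_le_sum
      (fun w' _ => Finset.sum_nonneg fun s' _ => step2 w' s') (Finset.mem_univ w)
  exact le_trans (le_trans step1 step3) step4

lemma nu_le_betaM (hPW0 : ∀ w, 0 ≤ PW w) (hPS0 : ∀ s, 0 ≤ PS s)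
    (hK0 : ∀ x s y, 0 ≤ K x s y) (i : Fin n) (a : 𝓧) (b : 𝓨) (c : 𝓢) :
    nu n PW PS K enc i a b c ≤ betaM n PW PS K enc i b c :=
  Finset.single_le_sum (f := fun a' => nu n PW PS K enc i a' b c)
    (fun a' _ => nu_nonneg hPW0 hPS0 hK0 i a' b c) (Finset.mem_univ a)

lemma betaM_nonneg (hPW0 : ∀ w, 0 ≤ PW w) (hPS0 : ∀ s, 0 ≤ PS s)
    (hK0 : ∀ x s y, 0 ≤ K x s y) (i : Fin n) (b : 𝓨) (c : 𝓢) :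
    0 ≤ betaM n PW PS K enc i b c :=
  Finset.sum_nonneg fun a _ => nu_nonneg hPW0 hPS0 hK0 i a b c

lemma cmi_F (hPW0 : ∀ w, 0 ≤ PW w) (hPW1 : ∑ w, PW w = 1)
    (hPS0 : ∀ s, 0 ≤ PS s) (hK0 : ∀ x s y, 0 ≤ K x s y)
    (hK1 : ∀ x s, ∑ y, K x s y = 1) :
    cmi (fun (w : W) (y : Fin n → 𝓨) (s : Fin n → 𝓢) => Fj n PW PS K enc w y s)
    = ∑ w, ∑ y : Fin n → 𝓨, ∑ s : Fin n → 𝓢, Fj n PW PS K enc w y s *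
        Real.logb 2 ((∏ j, K (enc w s j) (s j) (y j)) * (∏ j, PS (s j))
          / (∑ w', Fj n PW PS K enc w' y s)) := by
  unfold cmi
  refine Finset.sum_congr rfl fun w _ => Finset.sum_congr rfl fun y _ =>
    Finset.sum_congr rfl fun s _ => ?_
  dsimp only
  rw [sumWY_Fj hPW1 hK1, sumY_Fj hK1]
  by_cases hF : Fj n PW PS K enc w y s = 0
  · rw [hF, zero_mul, zero_mul]
  · have hF0 := Fj_nonneg (enc := enc) hPW0 hPS0 hK0
    have hFpos : 0 < Fj n PW PS K enc w y s := lt_of_le_of_ne (hF0 w y s) (Ne.symm hF)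
    have hfac : PW w ≠ 0 ∧ (∏ j, PS (s j)) ≠ 0 ∧ (∏ j, K (enc w s j) (s j) (y j)) ≠ 0 := by
      have h1 : PW w * (∏ j, PS (s j)) * ∏ j, K (enc w s j) (s j) (y j) ≠ 0 := hF
      refine ⟨fun h => hF ?_, fun h => hF ?_, fun h => hF ?_⟩ <;>
        · show PW w * (∏ j, PS (s j)) * ∏ j, K (enc w s j) (s j) (y j) = 0
          rw [h]; ring
    have hB : 0 < ∑ w', Fj n PW PS K enc w' y s :=
      lt_of_lt_of_le hFpos
        (Finset.single_le_sum (fun w' _ => hF0 w' y s) (Finset.mem_univ w))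
    have hFeq : Fj n PW PS K enc w y s
        = PW w * (∏ j, PS (s j)) * ∏ j, K (enc w s j) (s j) (y j) := rfl
    obtain ⟨h1, h2, h3⟩ := hfac
    congr 2
    rw [hFeq]
    field_simp

end Facts

section Collapse

lemma prod_collapse {T P : Type*} [Fintype T] [Fintype P] [DecidableEq P]
    (g : T → P) (v : T → ℝ) (f : P → ℝ) :
    ∑ p : P, (∑ t, if g t = p then v t else 0) * f p = ∑ t, v t * f (g t) := by
  simp_rw [Finset.sum_mul]
  rw [Finset.sum_comm]
  refine Finset.sum_congr rfl fun t _ => ?_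
  simp_rw [ite_mul, zero_mul]
  rw [Finset.sum_ite_eq Finset.univ (g t) (fun p => v t * f p)]
  simp

lemma triple_collapse {A B C U V Z : Type*}
    [Fintype A] [Fintype B] [Fintype C] [Fintype U] [Fintype V] [Fintype Z]
    [DecidableEq A] [DecidableEq B] [DecidableEq C]
    (X : U → V → Z → A) (Yf : U → V → Z → B) (Sf : U → V → Z → C)
    (v : U → V → Z → ℝ) (f : A → B → C → ℝ) :
    ∑ a, ∑ b, ∑ c,
      (∑ w, ∑ s, ∑ y, if X w s y = a ∧ Yf w s y = b ∧ Sf w s y = c then v w s y else 0)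
        * f a b c
    = ∑ w, ∑ s, ∑ y, v w s y * f (X w s y) (Yf w s y) (Sf w s y) := by
  have h := prod_collapse (T := U × V × Z) (P := A × B × C)
    (fun t => (X t.1 t.2.1 t.2.2, Yf t.1 t.2.1 t.2.2, Sf t.1 t.2.1 t.2.2))
    (fun t => v t.1 t.2.1 t.2.2) (fun p => f p.1 p.2.1 p.2.2)
  simpa [Fintype.sum_prod_type, Prod.ext_iff] using h

lemma single_collapse {A T : Type*} [Fintype A] [Fintype T] [DecidableEq A]
    (g : T → A) (P : T → Prop) [DecidablePred P] (v : T → ℝ) :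
    ∑ a, ∑ t, (if g t = a ∧ P t then v t else 0) = ∑ t, if P t then v t else 0 := by
  rw [Finset.sum_comm]
  refine Finset.sum_congr rfl fun t _ => ?_
  by_cases h : P t
  · simp [h, Finset.sum_ite_eq Finset.univ (g t) (fun _ => v t)]
  · simp [h]

lemma sum_comm4 {ι A B C : Type*} [Fintype ι] [Fintype A] [Fintype B] [Fintype C]
    (g : ι → A → B → C → ℝ) :
    ∑ i, ∑ a, ∑ b, ∑ c, g i a b c = ∑ a, ∑ b, ∑ c, ∑ i, g i a b c := by
  rw [Finset.sum_comm]
  refine Finset.sum_congr rfl fun a _ => ?_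
  rw [Finset.sum_comm]
  refine Finset.sum_congr rfl fun b _ => ?_
  rw [Finset.sum_comm]

end Collapse

section Facts2
variable {W 𝓧 𝓢 𝓨 : Type*} [Fintype W] [Fintype 𝓧] [Fintype 𝓢] [Fintype 𝓨]
    [DecidableEq 𝓧] [DecidableEq 𝓢] [DecidableEq 𝓨]
    {n : ℕ} {PW : W → ℝ} {PS : 𝓢 → ℝ} {K : 𝓧 → 𝓢 → 𝓨 → ℝ}
    {enc : W → (Fin n → 𝓢) → Fin n → 𝓧}

lemma alphaM_nonneg (hPW0 : ∀ w, 0 ≤ PW w) (hPS0 : ∀ s, 0 ≤ PS s)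
    (i : Fin n) (a : 𝓧) (c : 𝓢) : 0 ≤ alphaM n PW PS enc i a c := by
  refine Finset.sum_nonneg fun w _ => Finset.sum_nonneg fun s _ => ?_
  by_cases h : enc w s i = a ∧ s i = c
  · rw [if_pos h]
    exact mul_nonneg (hPW0 w) (Finset.prod_nonneg fun j _ => hPS0 _)
  · rw [if_neg h]

lemma cmi_nu (hPW0 : ∀ w, 0 ≤ PW w) (hPW1 : ∑ w, PW w = 1)
    (hPS0 : ∀ s, 0 ≤ PS s) (hPS1 : ∑ s, PS s = 1)
    (hK0 : ∀ x s y, 0 ≤ K x s y) (hK1 : ∀ x s, ∑ y, K x s y = 1) (i : Fin n) :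
    cmi (fun a b c => nu n PW PS K enc i a b c)
    = ∑ w, ∑ s : Fin n → 𝓢, ∑ y : Fin n → 𝓨, Fj n PW PS K enc w y s *
        Real.logb 2 (K (enc w s i) (s i) (y i) * PS (s i)
          / betaM n PW PS K enc i (y i) (s i)) := by
  unfold cmi
  have step1 : ∀ a b c, nu n PW PS K enc i a b c *
      Real.logb 2 ((nu n PW PS K enc i a b c * (∑ a', ∑ b', nu n PW PS K enc i a' b' c)) /
        ((∑ b', nu n PW PS K enc i a b' c) * (∑ a', nu n PW PS K enc i a' b c)))
      = nu n PW PS K enc i a b c *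
        Real.logb 2 (K a c b * PS c / betaM n PW PS K enc i b c) := by
    intro a b c
    have hm1 : (∑ a', ∑ b', nu n PW PS K enc i a' b' c) = PS c := by
      simp_rw [sumB_nu hK1]
      exact sum_alphaM hPW1 hPS1 i c
    have hm2 : (∑ b', nu n PW PS K enc i a b' c) = alphaM n PW PS enc i a c :=
      sumB_nu hK1 i a c
    have hm3 : (∑ a', nu n PW PS K enc i a' b c) = betaM n PW PS K enc i b c := rfl
    rw [hm1, hm2, hm3]
    by_cases hnu : nu n PW PS K enc i a b c = 0
    · rw [hnu, zero_mul, zero_mul]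
    · have hKa : K a c b ≠ 0 := by
        intro h; apply hnu; rw [nu_eq hK1, h, zero_mul]
      have hal : alphaM n PW PS enc i a c ≠ 0 := by
        intro h; apply hnu; rw [nu_eq hK1, h, mul_zero]
      have hnupos : 0 < nu n PW PS K enc i a b c :=
        lt_of_le_of_ne (nu_nonneg hPW0 hPS0 hK0 i a b c) (Ne.symm hnu)
      have hbe : betaM n PW PS K enc i b c ≠ 0 :=
        ne_of_gt (lt_of_lt_of_le hnupos (nu_le_betaM hPW0 hPS0 hK0 i a b c))
      congr 2
      rw [nu_eq hK1]
      field_simp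
  simp_rw [step1]
  have h2 := triple_collapse (X := fun (w : W) (s : Fin n → 𝓢) (y : Fin n → 𝓨) => enc w s i)
    (Yf := fun w s y => y i) (Sf := fun w s y => s i)
    (v := fun w s y => Fj n PW PS K enc w y s)
    (f := fun a b c => Real.logb 2 (K a c b * PS c / betaM n PW PS K enc i b c))
  simpa [nu] using h2
end Facts2

section Gibbs

lemma gibbs {ι : Type*} [Fintype ι] (p q : ι → ℝ)
    (hp : ∀ i, 0 ≤ p i) (hq : ∀ i, 0 ≤ q i)
    (hac : ∀ i, q i = 0 → p i = 0)
    (hpq : ∑ i, q i ≤ ∑ i, p i) :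
    0 ≤ ∑ i, p i * Real.logb 2 (p i / q i) := by
  have hl2 : (0:ℝ) < Real.log 2 := Real.log_pos (by norm_num)
  have key : ∀ i, (p i - q i) / Real.log 2 ≤ p i * Real.logb 2 (p i / q i) := by
    intro i
    rcases eq_or_lt_of_le (hp i) with h0 | hpos
    · rw [← h0]
      simp only [zero_mul, zero_sub]
      apply div_nonpos_of_nonpos_of_nonneg (by linarith [hq i]) (le_of_lt hl2)
    · have hq0 : 0 < q i := by
        rcases eq_or_lt_of_le (hq i) with h | h
        · exfalso; have := hac i h.symm; linarith
        · exact h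
      have hlog : Real.log (q i / p i) ≤ q i / p i - 1 :=
        Real.log_le_sub_one_of_pos (by positivity)
      have hle : p i - q i ≤ p i * Real.log (p i / q i) := by
        rw [Real.log_div (ne_of_gt hq0) (ne_of_gt hpos)] at hlog
        rw [Real.log_div (ne_of_gt hpos) (ne_of_gt hq0)]
        have h2 : p i * (Real.log (q i) - Real.log (p i)) ≤ p i * (q i / p i - 1) :=
          mul_le_mul_of_nonneg_left hlog (le_of_lt hpos)
        have h3 : p i * (q i / p i) = q i := mul_div_cancel₀ _ (ne_of_gt hpos)
        nlinarith [h2, h3]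
      rw [Real.logb, ← mul_div_assoc]
      gcongr
  calc (0:ℝ) ≤ (∑ i, p i - ∑ i, q i) / Real.log 2 := by
        apply div_nonneg (by linarith) (le_of_lt hl2)
    _ = ∑ i, (p i - q i) / Real.log 2 := by
        rw [← Finset.sum_sub_distrib, Finset.sum_div]
    _ ≤ _ := Finset.sum_le_sum fun i _ => key i

end Gibbs

section Main
variable {W 𝓧 𝓢 𝓨 : Type*} [Fintype W] [Fintype 𝓧] [Fintype 𝓢] [Fintype 𝓨]
    [DecidableEq 𝓧] [DecidableEq 𝓢] [DecidableEq 𝓨]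
    {n : ℕ} {PW : W → ℝ} {PS : 𝓢 → ℝ} {K : 𝓧 → 𝓢 → 𝓨 → ℝ}
    {enc : W → (Fin n → 𝓢) → Fin n → 𝓧}

lemma main_bound (hPW0 : ∀ w, 0 ≤ PW w) (hPW1 : ∑ w, PW w = 1)
    (hPS0 : ∀ s, 0 ≤ PS s) (hPS1 : ∑ s, PS s = 1)
    (hK0 : ∀ x s y, 0 ≤ K x s y) (hK1 : ∀ x s, ∑ y, K x s y = 1) :
    cmi (fun (w : W) (y : Fin n → 𝓨) (s : Fin n → 𝓢) => Fj n PW PS K enc w y s)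
    ≤ ∑ i : Fin n, cmi (fun a b c => nu n PW PS K enc i a b c) := by
  have hF0 := Fj_nonneg (enc := enc) hPW0 hPS0 hK0
  have hbeta := betaM_nonneg (enc := enc) hPW0 hPS0 hK0
  -- rewrite both sides
  have hR : ∑ i : Fin n, cmi (fun a b c => nu n PW PS K enc i a b c)
      = ∑ w, ∑ s : Fin n → 𝓢, ∑ y : Fin n → 𝓨, Fj n PW PS K enc w y s *
          ∑ i, Real.logb 2 (K (enc w s i) (s i) (y i) * PS (s i)
            / betaM n PW PS K enc i (y i) (s i)) := by
    have h1 : ∀ i : Fin n, cmi (fun a b c => nu n PW PS K enc i a b c)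
        = ∑ w, ∑ s : Fin n → 𝓢, ∑ y : Fin n → 𝓨, Fj n PW PS K enc w y s *
            Real.logb 2 (K (enc w s i) (s i) (y i) * PS (s i)
              / betaM n PW PS K enc i (y i) (s i)) :=
      fun i => cmi_nu hPW0 hPW1 hPS0 hPS1 hK0 hK1 i
    simp_rw [h1]
    rw [sum_comm4 (g := fun i w s y => Fj n PW PS K enc w y s *
      Real.logb 2 (K (enc w s i) (s i) (y i) * PS (s i)
        / betaM n PW PS K enc i (y i) (s i)))]
    simp_rw [← Finset.mul_sum]
  have hL : cmi (fun (w : W) (y : Fin n → 𝓨) (s : Fin n → 𝓢) => Fj n PW PS K enc w y s)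
      = ∑ w, ∑ s : Fin n → 𝓢, ∑ y : Fin n → 𝓨, Fj n PW PS K enc w y s *
          Real.logb 2 ((∏ j, K (enc w s j) (s j) (y j)) * (∏ j, PS (s j))
            / (∑ w', Fj n PW PS K enc w' y s)) := by
    rw [cmi_F hPW0 hPW1 hPS0 hK0 hK1]
    exact Finset.sum_congr rfl fun w _ => Finset.sum_comm
  rw [hL, hR, ← sub_nonneg, ← Finset.sum_sub_distrib]
  simp_rw [← Finset.sum_sub_distrib]
  have hpoint : ∀ (w : W) (s : Fin n → 𝓢) (y : Fin n → 𝓨),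
      Fj n PW PS K enc w y s *
          (∑ i, Real.logb 2 (K (enc w s i) (s i) (y i) * PS (s i)
            / betaM n PW PS K enc i (y i) (s i)))
        - Fj n PW PS K enc w y s *
          Real.logb 2 ((∏ j, K (enc w s j) (s j) (y j)) * (∏ j, PS (s j))
            / (∑ w', Fj n PW PS K enc w' y s))
      = Fj n PW PS K enc w y s *
          Real.logb 2 ((∑ w', Fj n PW PS K enc w' y s)
            / ∏ i, betaM n PW PS K enc i (y i) (s i)) := by
    intro w s y
    by_cases hF : Fj n PW PS K enc w y s = 0
    · rw [hF]; ring
    · have hFpos : 0 < Fj n PW PS K enc w y s := lt_of_le_of_ne (hF0 w y s) (Ne.symm hF)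
      have hKprod : (∏ j, K (enc w s j) (s j) (y j)) ≠ 0 := by
        intro h; apply hF
        show PW w * (∏ j, PS (s j)) * ∏ j, K (enc w s j) (s j) (y j) = 0
        rw [h, mul_zero]
      have hPSprod : (∏ j, PS (s j)) ≠ 0 := by
        intro h; apply hF
        show PW w * (∏ j, PS (s j)) * ∏ j, K (enc w s j) (s j) (y j) = 0
        rw [h]; ring
      have hKj : ∀ j : Fin n, K (enc w s j) (s j) (y j) ≠ 0 := by
        intro j
        exact Finset.prod_ne_zero_iff.mp hKprod j (Finset.mem_univ j)
      have hPSj : ∀ j : Fin n, PS (s j) ≠ 0 := by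
        intro j
        exact Finset.prod_ne_zero_iff.mp hPSprod j (Finset.mem_univ j)
      have hB : 0 < ∑ w', Fj n PW PS K enc w' y s :=
        lt_of_lt_of_le hFpos
          (Finset.single_le_sum (fun w' _ => hF0 w' y s) (Finset.mem_univ w))
      have hbj : ∀ i : Fin n, 0 < betaM n PW PS K enc i (y i) (s i) := by
        intro i
        exact lt_of_lt_of_le hFpos
          (le_trans (Fj_le_nu hPW0 hPS0 hK0 i w y s)
            (nu_le_betaM hPW0 hPS0 hK0 i (enc w s i) (y i) (s i)))
      have hQ : (0:ℝ) < ∏ i, betaM n PW PS K enc i (y i) (s i) :=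
        Finset.prod_pos fun i _ => hbj i
      rw [← mul_sub]
      congr 1
      have hterm : ∀ i : Fin n, K (enc w s i) (s i) (y i) * PS (s i)
          / betaM n PW PS K enc i (y i) (s i) ≠ 0 := by
        intro i
        exact div_ne_zero (mul_ne_zero (hKj i) (hPSj i)) (ne_of_gt (hbj i))
      have hsum : (∑ i, Real.logb 2 (K (enc w s i) (s i) (y i) * PS (s i)
            / betaM n PW PS K enc i (y i) (s i)))
          = Real.logb 2 (∏ i, (K (enc w s i) (s i) (y i) * PS (s i)
            / betaM n PW PS K enc i (y i) (s i))) :=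
        (Real.logb_prod Finset.univ _ fun i _ => hterm i).symm
      rw [hsum]
      have hprod : (∏ i, (K (enc w s i) (s i) (y i) * PS (s i)
            / betaM n PW PS K enc i (y i) (s i)))
          = ((∏ j, K (enc w s j) (s j) (y j)) * (∏ j, PS (s j)))
            / ∏ i, betaM n PW PS K enc i (y i) (s i) := by
        rw [Finset.prod_div_distrib, Finset.prod_mul_distrib]
      rw [hprod]
      rw [← Real.logb_div
        (div_ne_zero (mul_ne_zero hKprod hPSprod) (ne_of_gt hQ))
        (div_ne_zero (mul_ne_zero hKprod hPSprod) (ne_of_gt hB))]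
      congr 1
      field_simp
  simp_rw [hpoint]
  rw [Finset.sum_comm]
  have hswap : ∀ s : Fin n → 𝓢, (∑ w, ∑ y : Fin n → 𝓨, Fj n PW PS K enc w y s *
      Real.logb 2 ((∑ w', Fj n PW PS K enc w' y s)
        / ∏ i, betaM n PW PS K enc i (y i) (s i)))
      = ∑ y : Fin n → 𝓨, (∑ w', Fj n PW PS K enc w' y s) *
        Real.logb 2 ((∑ w', Fj n PW PS K enc w' y s)
          / ∏ i, betaM n PW PS K enc i (y i) (s i)) := by
    intro s
    rw [Finset.sum_comm]
    exact Finset.sum_congr rfl fun y _ => (Finset.sum_mul _ _ _).symm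
  simp_rw [hswap]
  -- apply Gibbs over the product type
  have hBsum : ∑ s : Fin n → 𝓢, ∑ y : Fin n → 𝓨, (∑ w', Fj n PW PS K enc w' y s) = 1 := by
    have : ∀ s : Fin n → 𝓢, (∑ y : Fin n → 𝓨, ∑ w', Fj n PW PS K enc w' y s)
        = ∏ j, PS (s j) := by
      intro s
      rw [Finset.sum_comm]
      exact sumWY_Fj hPW1 hK1 s
    simp_rw [this]
    exact sum_prodPS hPS1
  have hQsum : ∑ s : Fin n → 𝓢, ∑ y : Fin n → 𝓨,
      (∏ i, betaM n PW PS K enc i (y i) (s i)) = 1 := by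
    have : ∀ s : Fin n → 𝓢, (∑ y : Fin n → 𝓨, ∏ i, betaM n PW PS K enc i (y i) (s i))
        = ∏ j, PS (s j) := by
      intro s
      rw [sum_pi_prod (f := fun i t => betaM n PW PS K enc i t (s i))]
      exact Finset.prod_congr rfl fun i _ => sum_betaM hPW1 hPS1 hK1 i (s i)
    simp_rw [this]
    exact sum_prodPS hPS1
  have hgibbs := gibbs (ι := (Fin n → 𝓢) × (Fin n → 𝓨))
    (p := fun t => ∑ w', Fj n PW PS K enc w' t.2 t.1)
    (q := fun t => ∏ i, betaM n PW PS K enc i (t.2 i) (t.1 i))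
    (fun t => Finset.sum_nonneg fun w' _ => hF0 w' t.2 t.1)
    (fun t => Finset.prod_nonneg fun i _ => hbeta i (t.2 i) (t.1 i))
    (by
      rintro ⟨s, y⟩ hq0
      by_contra hBne
      have hBpos : 0 < ∑ w', Fj n PW PS K enc w' y s :=
        lt_of_le_of_ne (Finset.sum_nonneg fun w' _ => hF0 w' y s) (Ne.symm hBne)
      obtain ⟨w, _, hw⟩ := Finset.exists_ne_zero_of_sum_ne_zero hBne
      have hFpos : 0 < Fj n PW PS K enc w y s := lt_of_le_of_ne (hF0 w y s) (Ne.symm hw)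
      have hbj : ∀ i : Fin n, 0 < betaM n PW PS K enc i (y i) (s i) := by
        intro i
        exact lt_of_lt_of_le hFpos
          (le_trans (Fj_le_nu hPW0 hPS0 hK0 i w y s)
            (nu_le_betaM hPW0 hPS0 hK0 i (enc w s i) (y i) (s i)))
      exact absurd hq0 (ne_of_gt (Finset.prod_pos fun i _ => hbj i)))
    (by
      rw [Fintype.sum_prod_type, Fintype.sum_prod_type]
      dsimp only
      rw [hBsum, hQsum])
  rw [Fintype.sum_prod_type] at hgibbs
  exact hgibbs

end Main

theorem converse_single_letter_bound
    {W 𝓧 𝓢 𝓨 : Type*} [Fintype W] [Fintype 𝓧] [Fintype 𝓢] [Fintype 𝓨]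
    [DecidableEq 𝓧] [DecidableEq 𝓢] [DecidableEq 𝓨]
    (n : ℕ)
    (PW : W → ℝ) (PS : 𝓢 → ℝ) (K : 𝓧 → 𝓢 → 𝓨 → ℝ)
    (hPW0 : ∀ w, 0 ≤ PW w) (hPW1 : ∑ w, PW w = 1)
    (hPS0 : ∀ s, 0 ≤ PS s) (hPS1 : ∑ s, PS s = 1)
    (hK0 : ∀ x s y, 0 ≤ K x s y) (hK1 : ∀ x s, ∑ y, K x s y = 1)
    (enc : W → (Fin n → 𝓢) → Fin n → 𝓧)
    -- the input at time i depends only on (W, S^{i-1}): causality, no feedback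
    (hcausal : ∀ w (s s' : Fin n → 𝓢) (i : Fin n),
      (∀ j : Fin n, j < i → s j = s' j) → enc w s i = enc w s' i) :
    -- I(W; Y^n | S^n) ≤ ∑ i I(X_i; Y_i | S_i), where the joint law is
    -- μ(w, s^n, y^n) = PW(w) · ∏_i PS(s_i) · ∏_i K(y_i | x_i, s_i), x_i = enc(w, s^n)_i
    cmi (fun (w : W) (y : Fin n → 𝓨) (s : Fin n → 𝓢) =>
        PW w * (∏ i, PS (s i)) * ∏ i, K (enc w s i) (s i) (y i)) ≤
    ∑ i : Fin n,
      cmi (fun (a : 𝓧) (b : 𝓨) (c : 𝓢) =>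
        ∑ w, ∑ s : Fin n → 𝓢, ∑ y : Fin n → 𝓨,
          if enc w s i = a ∧ y i = b ∧ s i = c then
            PW w * (∏ j, PS (s j)) * ∏ j, K (enc w s j) (s j) (y j)
          else 0) := by
  exact main_bound hPW0 hPW1 hPS0 hPS1 hK0 hK1
end

section
/- In the binary channel Y = S·X with S ~ Bernoulli(q), q ≤ 1/2, perfect feedback Z = Y, and Hamming distortion: the optimal symbolwise estimator ŝ*(x, z) achieves expected sensing distortion E[d(S, ŝ*(X, Z))] = α·q where α = P(X = 0). Specifically, when x = 1 the state is recovered exactly (ŝ* = z), and when x = 0 the estimator outputs ŝ* = 0 incurring distortion q. -/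
/-- Binary sensing example: Y = Z = S·X, Hamming distortion; the optimal symbolwise
estimator ĥ(x,z) = x ∧ z achieves expected distortion α·q, which is minimal. -/
theorem binary_sensing_distortion (α q : ℝ)
    (hα : α ∈ Set.Icc (0:ℝ) 1) (hq0 : 0 ≤ q) (hq2 : q ≤ 1/2) :
    (∀ h : Bool → Bool → Bool,
      α * q ≤ ∑ x : Bool, ∑ s : Bool,
        (if x then 1 - α else α) * (if s then q else 1 - q) *
          (if s = h x (x && s) then 0 else 1)) ∧
    (∑ x : Bool, ∑ s : Bool,
        (if x then 1 - α else α) * (if s then q else 1 - q) *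
          (if s = (x && (x && s)) then 0 else 1)) = α * q := by
  obtain ⟨hα0, hα1⟩ := hα
  constructor
  · intro h
    simp only [Fintype.sum_bool]
    rcases hf : h false false with _ | _ <;>
      rcases ht : h true false with _ | _ <;>
        rcases htt : h true true with _ | _ <;>
          simp [hf, ht, htt] <;> nlinarith
  · simp [Fintype.sum_bool]
end
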